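/- Let X be a non-separable complex Banach space having the NIP and let P : X → ℂ be a nonzero continuous 2-homogeneous polynomial. Then every P-maximal subspace of X is non-separable. -/

import Mathlib

/-- `P : X → ℂ` is an `n`-homogeneous polynomial: there is a symmetric `n`-linear form `A`
with `P x = A (x, …, x)`. -/
def IsHomogPoly {X : Type*} [NormedAddCommGroup X] [NormedSpace ℂ X]
    (n : ℕ) (P : X → ℂ) : Prop :=
  ∃ A : MultilinearMap ℂ (fun _ : Fin n => X) ℂ,
    (∀ (σ : Equiv.Perm (Fin n)) (v : Fin n → X), (A fun i => v (σ i)) = A v) ∧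
    ∀ x, P x = A fun _ => x

/-- `P` is a continuous `n`-homogeneous polynomial. -/
def IsContHomogPoly {X : Type*} [NormedAddCommGroup X] [NormedSpace ℂ X]
    (n : ℕ) (P : X → ℂ) : Prop :=
  IsHomogPoly n P ∧ ∃ C : ℝ, ∀ x, ‖P x‖ ≤ C * ‖x‖ ^ n

/-- `M` is a `P`-maximal subspace. -/
def IsPMaximal {X : Type*} [NormedAddCommGroup X] [NormedSpace ℂ X]
    (P : X → ℂ) (M : Submodule ℂ X) : Prop :=
  M ≠ ⊤ ∧ (∀ x ∈ M, P x = 0) ∧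
    ∀ M₁ : Submodule ℂ X, M ≤ M₁ → (∀ x ∈ M₁, P x = 0) → M₁ = M

/-- `X` has the nontrivial intersection property (NIP). -/
def HasNIP (X : Type*) [NormedAddCommGroup X] [NormedSpace ℂ X] : Prop :=
  ∀ φ : ℕ → (X →L[ℂ] ℂ), (⨅ i, LinearMap.ker (φ i : X →ₗ[ℂ] ℂ)) ≠ ⊥

/-!
Polarizing `P` gives a symmetric bilinear form `B` with `P x = B x x`, continuous in each
variable since `P` is bounded on the unit ball. As `ℂ` is algebraically closed, the
`B`-orthogonal `Mᗮ` of a maximal isotropic subspace `M` lies in `M + ℂ w` for a single `w`: an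
element of `Mᗮ` becomes isotropic after adding a suitable multiple of an anisotropic `w ∈ Mᗮ`,
and is then in `M` by maximality. If `M` were separable, `Mᗮ` would contain the common kernel of
the countably many functionals `B d`, `d` in a dense subset of `M`, while `M + ℂ w` would be
separable and hence separated from `0` by countably many norming functionals. The NIP applied to
both families together gives a vector of `Mᗮ` outside `M + ℂ w`.
-/

open TopologicalSpace
open LinearMap (BilinForm)

namespace LinearMap.BilinForm

section Algebra

variable {K V : Type*} [Field K] [AddCommGroup V] [Module K V] {B : BilinForm K V}

theorem IsSymm.apply_add_smul_self (hB : B.IsSymm) (x y : V) (t : K) :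
    B (x + t • y) (x + t • y) = B x x + 2 * t * B x y + t ^ 2 * B y y := by
  simp only [map_add, map_smul, LinearMap.add_apply, LinearMap.smul_apply, smul_eq_mul]
  rw [hB.eq y x]
  ring

theorem IsSymm.apply_self_eq_zero_of_mem_sup_span (hB : B.IsSymm) {M : Submodule K V}
    (hM : ∀ x ∈ M, B x x = 0) {z : V} (hzM : z ∈ B.orthogonal M) (hz : B z z = 0) :
    ∀ x ∈ M ⊔ K ∙ z, B x x = 0 := by
  intro x hx
  obtain ⟨m, hm, _, hs, rfl⟩ := Submodule.mem_sup.1 hx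
  obtain ⟨t, rfl⟩ := Submodule.mem_span_singleton.1 hs
  rw [hB.apply_add_smul_self, hM m hm, hzM m hm, hz]
  ring

variable {M : Submodule K V}

theorem IsSymm.mem_of_mem_orthogonal_of_apply_self_eq_zero (hB : B.IsSymm)
    (hM : ∀ x ∈ M, B x x = 0) (hmax : ∀ M₁ : Submodule K V, M ≤ M₁ → (∀ x ∈ M₁, B x x = 0) → M₁ = M)
    {z : V} (hzM : z ∈ B.orthogonal M) (hz : B z z = 0) : z ∈ M := by
  rw [← hmax _ le_sup_left (hB.apply_self_eq_zero_of_mem_sup_span hM hzM hz)]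
  exact Submodule.mem_sup_right (Submodule.mem_span_singleton_self z)

theorem IsSymm.exists_orthogonal_le_sup_span [NeZero (2 : K)] [IsAlgClosed K] (hB : B.IsSymm)
    (hM : ∀ x ∈ M, B x x = 0)
    (hmax : ∀ M₁ : Submodule K V, M ≤ M₁ → (∀ x ∈ M₁, B x x = 0) → M₁ = M) :
    ∃ w, B.orthogonal M ≤ M ⊔ K ∙ w := by
  by_cases hiso : ∀ z ∈ B.orthogonal M, B z z = 0
  · exact ⟨0, fun z hz => Submodule.mem_sup_left
      (mem_of_mem_orthogonal_of_apply_self_eq_zero hB hM hmax hz (hiso z hz))⟩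
  push Not at hiso
  obtain ⟨w, hw, hww⟩ := hiso
  refine ⟨w, fun z hz => ?_⟩
  obtain ⟨t, ht⟩ := exists_quadratic_eq_zero (b := 2 * B z w) (c := B z z) hww
    (IsAlgClosed.exists_eq_mul_self _)
  have hzt : z + t • w ∈ M := by
    refine mem_of_mem_orthogonal_of_apply_self_eq_zero hB hM hmax
      (add_mem hz (Submodule.smul_mem _ t hw)) ?_
    rw [hB.apply_add_smul_self]
    linear_combination ht
  rw [show z = (z + t • w) + (-t) • w by simp]
  exact Submodule.add_mem_sup hzt (Submodule.mem_span_singleton.2 ⟨-t, rfl⟩)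

end Algebra

theorem IsSymm.continuous_apply_of_norm_apply_self_le {𝕜 X : Type*} [RCLike 𝕜]
    [NormedAddCommGroup X] [NormedSpace 𝕜 X] {B : BilinForm 𝕜 X} (hB : B.IsSymm) {C : ℝ}
    (hC : ∀ x, ‖B x x‖ ≤ C * ‖x‖ ^ 2) (x : X) : Continuous (B x) := by
  have hC' (x : X) : ‖B x x‖ ≤ |C| * ‖x‖ ^ 2 := (hC x).trans (by gcongr; exact le_abs_self C)
  have hball : ∀ y ∈ Metric.closedBall (0 : X) 1,
      ‖B x y‖ ≤ (|C| * (‖x‖ + 1) ^ 2 + |C| * ‖x‖ ^ 2 + |C|) / 2 := by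
    intro y hy
    rw [mem_closedBall_zero_iff] at hy
    have hxy : ‖x + y‖ ≤ ‖x‖ + 1 := (norm_add_le x y).trans (by linarith)
    rw [hB.polarization, norm_div, RCLike.norm_two]
    gcongr
    calc ‖B (x + y) (x + y) - B x x - B y y‖
        ≤ ‖B (x + y) (x + y)‖ + ‖B x x‖ + ‖B y y‖ := norm_sub_le_of_le (norm_sub_le _ _) le_rfl
      _ ≤ |C| * (‖x‖ + 1) ^ 2 + |C| * ‖x‖ ^ 2 + |C| * 1 ^ 2 := by
        gcongr <;> refine (hC' _).trans ?_ <;> gcongr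
      _ = _ := by ring
  exact AddMonoidHomClass.continuous_of_bound (B x) _
    ((B x).bound_of_ball_bound' one_pos _ hball)

theorem IsSymm.mem_orthogonal_of_subset_closure {K X : Type*} [Field K]
    [TopologicalSpace K] [T1Space K] [AddCommGroup X] [Module K X] [TopologicalSpace X]
    {B : BilinForm K X} (hB : B.IsSymm) {v : X} (hv : Continuous (B v)) {M : Submodule K X}
    {C : Set X} (hMC : (M : Set X) ⊆ closure C) (hCv : ∀ c ∈ C, B c v = 0) :
    v ∈ B.orthogonal M := by
  have hC : C ⊆ {m | B v m = 0} := fun c hc => (hB.eq v c).trans (hCv c hc)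
  intro m hm
  exact (hB.eq m v).trans (closure_minimal hC (isClosed_singleton.preimage hv) (hMC hm))

end LinearMap.BilinForm

theorem IsHomogPoly.exists_bilinForm {X : Type*} [NormedAddCommGroup X] [NormedSpace ℂ X]
    {P : X → ℂ} (hP : IsHomogPoly 2 P) :
    ∃ B : BilinForm ℂ X, B.IsSymm ∧ ∀ x, P x = B x x := by
  obtain ⟨A, hsymm, hPA⟩ := hP
  have update_zero (x y z : X) : Function.update ![x, y] 0 z = ![z, y] := by
    ext i; fin_cases i <;> rfl
  have update_one (x y z : X) : Function.update ![x, y] 1 z = ![x, z] := by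
    ext i; fin_cases i <;> rfl
  refine ⟨LinearMap.mk₂ ℂ (fun x y => A ![x, y]) (fun x x' y => ?_) (fun c x y => ?_)
    (fun x y y' => ?_) (fun c x y => ?_), ⟨fun x y => ?_⟩, fun x => ?_⟩
  · simpa only [update_zero] using A.map_update_add ![x, y] 0 x x'
  · simpa only [update_zero] using A.map_update_smul ![x, y] 0 c x
  · simpa only [update_one] using A.map_update_add ![x, y] 1 y y'
  · simpa only [update_one] using A.map_update_smul ![x, y] 1 c y
  · have hswap : (fun i => ![y, x] (Equiv.swap 0 1 i)) = ![x, y] := by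
      ext i; fin_cases i <;> rfl
    exact (congrArg A hswap).symm.trans (hsymm _ _)
  · have hdiag : (fun _ : Fin 2 => x) = ![x, x] := by
      ext i; fin_cases i <;> rfl
    exact (hPA x).trans (congrArg A hdiag)

theorem eq_zero_of_mem_closure_of_forall_norming_apply_eq_zero {𝕜 X : Type*} [RCLike 𝕜]
    [NormedAddCommGroup X] [NormedSpace 𝕜 X] {ψ : X → StrongDual 𝕜 X} (hψ1 : ∀ x, ‖ψ x‖ ≤ 1)
    (hψx : ∀ x, ψ x x = ‖x‖) {C : Set X} {v : X} (hv : v ∈ closure C)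
    (hCv : ∀ c ∈ C, ψ c v = 0) : v = 0 := by
  by_contra hv0
  obtain ⟨c, hc, hvc⟩ := Metric.mem_closure_iff.1 hv (‖v‖ / 2) (by positivity)
  rw [dist_eq_norm] at hvc
  have hc_le : ‖c‖ ≤ ‖v - c‖ :=
    calc ‖c‖ = ‖ψ c c‖ := by rw [hψx c, RCLike.norm_ofReal, abs_norm]
    _ = ‖ψ c (v - c)‖ := by rw [map_sub, hCv c hc, zero_sub, norm_neg]
    _ ≤ ‖ψ c‖ * ‖v - c‖ := (ψ c).le_opNorm _
    _ ≤ ‖v - c‖ := mul_le_of_le_one_left (norm_nonneg _) (hψ1 c)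
  have hv_le := norm_le_norm_add_norm_sub' v c
  linarith

theorem HasNIP.iInf_ker_ne_bot {X : Type*} [NormedAddCommGroup X] [NormedSpace ℂ X]
    (hNIP : HasNIP X) {ι : Type*} [Countable ι] (φ : ι → X →L[ℂ] ℂ) :
    (⨅ i, LinearMap.ker (φ i : X →ₗ[ℂ] ℂ)) ≠ ⊥ := by
  rcases isEmpty_or_nonempty ι with _ | _
  · rw [iInf_of_empty]
    simpa using hNIP 0
  · obtain ⟨e, he⟩ := exists_surjective_nat ι
    rw [← he.iInf_comp]
    exact hNIP (φ ∘ e)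

theorem HasNIP.exists_forall_eq_zero_notMem {X : Type*} [NormedAddCommGroup X]
    [NormedSpace ℂ X] (hNIP : HasNIP X) {ι : Type*} [Countable ι] (φ : ι → X →L[ℂ] ℂ)
    {S : Set X} (hS : IsSeparable S) : ∃ v, (∀ i, φ i v = 0) ∧ v ∉ S := by
  obtain ⟨C, hCc, hSC⟩ := hS
  have : Countable C := hCc.to_subtype
  choose ψ hψ1 hψx using exists_dual_vector'' ℂ (E := X)
  obtain ⟨v, hv, hv0⟩ := (Submodule.ne_bot_iff _).1
    (hNIP.iInf_ker_ne_bot (Sum.elim φ fun c : C => ψ c))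
  simp only [Submodule.mem_iInf, LinearMap.mem_ker, Sum.forall, Sum.elim_inl, Sum.elim_inr,
    ContinuousLinearMap.coe_coe, Subtype.forall] at hv
  exact ⟨v, hv.1, fun hvS => hv0
    (eq_zero_of_mem_closure_of_forall_norming_apply_eq_zero hψ1 hψx (hSC hvS) hv.2)⟩

theorem pMaximal_nonseparable_of_nip_general {X : Type*} [NormedAddCommGroup X] [NormedSpace ℂ X]
    (hNIP : HasNIP X)
    (P : X → ℂ) (hP : IsContHomogPoly 2 P) :
    ∀ M : Submodule ℂ X, IsPMaximal P M → ¬ TopologicalSpace.IsSeparable (M : Set X) := by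
  intro M ⟨_, hMiso, hMmax⟩ hMsep
  obtain ⟨B, hB, hPB⟩ := hP.1.exists_bilinForm
  obtain ⟨C, hC⟩ := hP.2
  obtain rfl : P = fun x => B x x := funext hPB
  have hBc := hB.continuous_apply_of_norm_apply_self_le hC
  obtain ⟨w, hw⟩ := hB.exists_orthogonal_le_sup_span hMiso hMmax
  have hsep : IsSeparable ((M ⊔ ℂ ∙ w : Submodule ℂ X) : Set X) := by
    rw [Submodule.sup_span]
    exact (hMsep.union (Set.countable_singleton w).isSeparable).span
  obtain ⟨D, hDc, hMD⟩ := hMsep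
  have : Countable D := hDc.to_subtype
  obtain ⟨v, hvD, hv⟩ := hNIP.exists_forall_eq_zero_notMem (fun d : D => ⟨B d, hBc d⟩) hsep
  exact hv (hw (hB.mem_orthogonal_of_subset_closure (hBc v) hMD fun d hd => hvD ⟨d, hd⟩))

/-- If `X` is a non-separable complex Banach space with the NIP and `P` is a nonzero
continuous 2-homogeneous polynomial on `X`, then every `P`-maximal subspace is
non-separable. -/
theorem pMaximal_nonseparable_of_nip {X : Type*} [NormedAddCommGroup X] [NormedSpace ℂ X]
    [CompleteSpace X] (hX : ¬ TopologicalSpace.SeparableSpace X) (hNIP : HasNIP X)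
    (P : X → ℂ) (hP : IsContHomogPoly 2 P) (hP0 : P ≠ 0) :
    ∀ M : Submodule ℂ X, IsPMaximal P M → ¬ TopologicalSpace.IsSeparable (M : Set X) :=
  pMaximal_nonseparable_of_nip_general hNIP P hP
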